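/- arXiv:2101.10364 — 3 statements merged into one kernel-verified Lean document; each statement's English description precedes it below -/
import Mathlib

section
/- Let G be a subgroup of S_k × C_ℓ (k = 3 or k ≥ 5, ℓ ≥ 1) containing S_{k-1} × {1}, where S_{k-1} ⊂ S_k is the stabilizer of the element k. Then G ⊆ S_{k-1} × C_ℓ or G ⊇ S_k × {1}. -/
/-- A subgroup `G` of `S_k × C_ℓ` (with `k = 3` or `k ≥ 5`)
containing the stabilizer `S_{k-1} × {1}` of the point `k` satisfies
`G ⊆ S_{k-1} × C_ℓ` or `G ⊇ S_k × {1}`. -/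
theorem stmt0 (k ℓ : ℕ) (hk : k = 3 ∨ 5 ≤ k) (hℓ : 1 ≤ ℓ)
    (G : Subgroup (Equiv.Perm (Fin k) × Multiplicative (ZMod ℓ)))
    (hG : (MulAction.stabilizer (Equiv.Perm (Fin k)) (⟨k - 1, by omega⟩ : Fin k)).prod
        (⊥ : Subgroup (Multiplicative (ZMod ℓ))) ≤ G) :
    G ≤ (MulAction.stabilizer (Equiv.Perm (Fin k)) (⟨k - 1, by omega⟩ : Fin k)).prod
        (⊤ : Subgroup (Multiplicative (ZMod ℓ))) ∨
      (⊤ : Subgroup (Equiv.Perm (Fin k))).prod (⊥ : Subgroup (Multiplicative (ZMod ℓ))) ≤ G := by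
  set a : Fin k := ⟨k - 1, by omega⟩ with ha
  by_cases hcase : ∀ g ∈ G, (Prod.fst g) a = a
  · left
    intro g hg
    exact Subgroup.mem_prod.2 ⟨hcase g hg, trivial⟩
  · right
    push_neg at hcase
    obtain ⟨g, hgG, hga⟩ := hcase
    set σ := g.1 with hσ
    set N : Subgroup (Equiv.Perm (Fin k)) :=
      G.comap (MonoidHom.inl (Equiv.Perm (Fin k)) (Multiplicative (ZMod ℓ))) with hNdef
    have memN : ∀ τ : Equiv.Perm (Fin k), τ ∈ N ↔ ((τ, 1) : _) ∈ G := fun τ => Iff.rfl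
    have hHN : ∀ τ : Equiv.Perm (Fin k), τ a = a → τ ∈ N := by
      intro τ hτ
      exact (memN τ).2 (hG (Subgroup.mem_prod.2 ⟨hτ, Subgroup.mem_bot.2 rfl⟩))
    have hconj : ∀ τ : Equiv.Perm (Fin k), τ a = a → σ * τ * σ⁻¹ ∈ N := by
      intro τ hτ
      have h1 : ((τ, 1) : _) ∈ G := (memN τ).1 (hHN τ hτ)
      have h2 : g * (τ, 1) * g⁻¹ ∈ G := G.mul_mem (G.mul_mem hgG h1) (G.inv_mem hgG)
      have h3 : g * (τ, 1) * g⁻¹ = ((σ * τ * σ⁻¹, 1) : _) := by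
        ext
        · rfl
        · simp
      rw [h3] at h2
      exact (memN _).2 h2
    have hswap1 : ∀ c : Fin k, c ≠ a → c ≠ σ a → Equiv.swap a c ∈ N := by
      intro c hca hcb
      have hxa : σ⁻¹ a ≠ a := by
        intro h
        apply hga
        have := congrArg σ h
        rw [Equiv.Perm.coe_inv, Equiv.apply_symm_apply] at this
        exact this.symm
      have hya : σ⁻¹ c ≠ a := by
        intro h
        apply hcb
        have := congrArg σ h
        rw [Equiv.Perm.coe_inv, Equiv.apply_symm_apply] at this
        exact this
      have hmem : Equiv.swap (σ⁻¹ a) (σ⁻¹ c) ∈ N :=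
        hHN _ (Equiv.swap_apply_of_ne_of_ne (Ne.symm hxa) (Ne.symm hya))
      have := hconj _ (Equiv.swap_apply_of_ne_of_ne (Ne.symm hxa) (Ne.symm hya))
      rwa [← Equiv.swap_apply_apply, Equiv.Perm.coe_inv, Equiv.apply_symm_apply,
        Equiv.apply_symm_apply] at this
    -- get c ∉ {a, σ a}
    obtain ⟨c, hc⟩ : ((Finset.univ : Finset (Fin k)) \ {a, σ a}).Nonempty := by
      rw [← Finset.card_pos, Finset.card_sdiff_of_subset (Finset.subset_univ _)]
      have h1 : ({a, σ a} : Finset (Fin k)).card ≤ 2 :=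
        le_trans (Finset.card_insert_le _ _) (by simp)
      have h2 : (Finset.univ : Finset (Fin k)).card = k := by simp
      omega
    rw [Finset.mem_sdiff, Finset.mem_insert, Finset.mem_singleton] at hc
    push_neg at hc
    obtain ⟨-, hca, hcb⟩ := hc
    have hba : σ a ≠ a := hga
    have hswapb : Equiv.swap a (σ a) ∈ N := by
      have h1 : Equiv.swap a c ∈ N := hswap1 c hca hcb
      have h2 : Equiv.swap c (σ a) ∈ N :=
        hHN _ (Equiv.swap_apply_of_ne_of_ne (Ne.symm hca) (Ne.symm hba))
      have h3 : Equiv.swap a c * Equiv.swap c (σ a) * (Equiv.swap a c)⁻¹ ∈ N :=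
        N.mul_mem (N.mul_mem h1 h2) (N.inv_mem h1)
      rwa [← Equiv.swap_apply_apply, Equiv.swap_apply_right,
        Equiv.swap_apply_of_ne_of_ne hba (Ne.symm hcb)] at h3
    have hallswap : ∀ x y : Fin k, x ≠ y → Equiv.swap x y ∈ N := by
      intro x y hxy
      by_cases hx : x = a
      · subst hx
        by_cases hy : y = σ a
        · subst hy; exact hswapb
        · exact hswap1 y (Ne.symm hxy) hy
      · by_cases hy : y = a
        · subst hy
          rw [Equiv.swap_comm]
          by_cases hx2 : x = σ a
          · subst hx2; exact hswapb
          · exact hswap1 x hx hx2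
        · exact hHN _ (Equiv.swap_apply_of_ne_of_ne (Ne.symm hx) (Ne.symm hy))
    have hNtop : N = ⊤ := by
      rw [eq_top_iff, ← Equiv.Perm.closure_isSwap, Subgroup.closure_le]
      rintro f ⟨x, y, hxy, rfl⟩
      exact hallswap x y hxy
    intro p hp
    rw [Subgroup.mem_prod] at hp
    have hp2 : p.2 = 1 := Subgroup.mem_bot.1 hp.2
    have hp1 : p.1 ∈ N := hNtop ▸ Subgroup.mem_top _
    have : ((p.1, 1) : _) ∈ G := (memN _).1 hp1
    rwa [show p = (p.1, (1 : Multiplicative (ZMod ℓ))) from Prod.ext rfl hp2]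
end

section
/- Let k ≥ 3 and let G be a subgroup of S_k × C_ℓ containing S_{k-1} × {1} and an element ((1 k), u) where u has even order o. Then ((1 k), 1) ∈ G, via the identity ((12),1)·[((1k),u)((12),1)((1k),u)·((1k),u)^{o−2}]·((12),1) = ((1k),1). -/
lemma swap_five {α : Type*} [DecidableEq α] (x y a : α)
    (hxy : x ≠ y) (hxa : x ≠ a) (hya : y ≠ a) :
    Equiv.swap x y * Equiv.swap x a * Equiv.swap x y * Equiv.swap x a *
      Equiv.swap x y = Equiv.swap x a := by
  ext z
  simp only [Equiv.Perm.mul_apply]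
  rcases eq_or_ne z x with rfl | hzx
  · simp [Equiv.swap_apply_of_ne_of_ne, hxy, hxa, hya, hxy.symm, hxa.symm, hya.symm]
  rcases eq_or_ne z y with rfl | hzy
  · simp [Equiv.swap_apply_of_ne_of_ne, hxy, hxa, hya, hxy.symm, hxa.symm, hya.symm]
  rcases eq_or_ne z a with rfl | hza
  · simp [Equiv.swap_apply_of_ne_of_ne, hxy, hxa, hya, hxy.symm, hxa.symm, hya.symm]
  · simp [Equiv.swap_apply_of_ne_of_ne, hzx, hzy, hza]

/-- If `k ≥ 3`, `u ∈ C_ℓ` has even order, and `G ≤ S_k × C_ℓ` contains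
`S_{k-1} × {1}` and `((1 k), u)`, then `((1 k), 1) ∈ G`. -/
theorem stmt2 (k ℓ : ℕ) (hk : 3 ≤ k) (hℓ : 1 ≤ ℓ)
    (u : Multiplicative (ZMod ℓ)) (heven : Even (orderOf u))
    (G : Subgroup (Equiv.Perm (Fin k) × Multiplicative (ZMod ℓ)))
    (hstab : (MulAction.stabilizer (Equiv.Perm (Fin k)) (⟨k - 1, by omega⟩ : Fin k)).prod
        (⊥ : Subgroup (Multiplicative (ZMod ℓ))) ≤ G)
    (hmem : (Equiv.swap (⟨0, by omega⟩ : Fin k) (⟨k - 1, by omega⟩ : Fin k), u) ∈ G) :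
    (Equiv.swap (⟨0, by omega⟩ : Fin k) (⟨k - 1, by omega⟩ : Fin k),
      (1 : Multiplicative (ZMod ℓ))) ∈ G := by
  haveI : NeZero ℓ := ⟨by omega⟩
  set x : Fin k := ⟨0, by omega⟩ with hx
  set y : Fin k := ⟨1, by omega⟩ with hy
  set a : Fin k := ⟨k - 1, by omega⟩ with ha
  have hxy : x ≠ y := by simp [hx, hy, Fin.ext_iff]
  have hxa : x ≠ a := by simp [hx, ha, Fin.ext_iff]; omega
  have hya : y ≠ a := by simp [hy, ha, Fin.ext_iff]; omega
  set s : Equiv.Perm (Fin k) := Equiv.swap x a with hs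
  set t : Equiv.Perm (Fin k) := Equiv.swap x y with ht
  set o : ℕ := orderOf u with ho
  have hopos : 0 < o := orderOf_pos u
  have ho2 : 2 ≤ o := by rcases heven with ⟨c, hc⟩; omega
  -- (t, 1) ∈ G
  have htG : ((t, (1 : Multiplicative (ZMod ℓ))) :
      Equiv.Perm (Fin k) × Multiplicative (ZMod ℓ)) ∈ G := by
    apply hstab
    refine Subgroup.mem_prod.2 ⟨?_, Subgroup.mem_bot.2 rfl⟩
    simp only [MulAction.mem_stabilizer_iff]
    show t a = a
    exact Equiv.swap_apply_of_ne_of_ne (Ne.symm hxa) (Ne.symm hya)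
  -- the key element of G
  have hel : ((t, (1:Multiplicative (ZMod ℓ))) * (s, u) * (t, 1) * (s, u) *
      (s, u) ^ (o - 2) * (t, 1)) ∈ G :=
    mul_mem (mul_mem (mul_mem (mul_mem (mul_mem htG hmem) htG) hmem)
      (pow_mem hmem _)) htG
  have hseven : s ^ (o - 2) = 1 := by
    obtain ⟨c, hc⟩ := heven
    have h2 : o - 2 = 2 * (c - 1) := by omega
    rw [h2, pow_mul, sq, Equiv.swap_mul_self, one_pow]
  have hueq : (1:Multiplicative (ZMod ℓ)) * u * 1 * u * u ^ (o - 2) * 1 = 1 := by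
    have h3 : u * u * u ^ (o - 2) = u ^ o := by
      rw [show u * u = u ^ 2 from (sq u).symm, ← pow_add,
        show 2 + (o - 2) = o by omega]
    simp only [one_mul, mul_one]
    rw [h3, ho, pow_orderOf_eq_one]
  have key : ((t, (1:Multiplicative (ZMod ℓ))) * (s, u) * (t, 1) * (s, u) *
      (s, u) ^ (o - 2) * (t, 1)) = (s, 1) := by
    simp only [Prod.pow_mk, Prod.mk_mul_mk, Prod.mk.injEq]
    refine ⟨?_, hueq⟩
    rw [hseven, mul_one]
    exact swap_five x y a hxy hxa hya
  rw [key] at hel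
  exact hel
end

section
/- Let x_1, ..., x_N be real numbers with x_1^2 + ... + x_N^2 ≤ 1. Then the discriminant satisfies ∏_{1 ≤ i < j ≤ N} (x_i − x_j)^2 ≤ c_N^{−(N^2−N)/2}, where c_N = (N^2 − N) / (2^2·3^3·⋯·N^N)^{2/(N^2−N)}. -/
set_option maxHeartbeats 1000000
open Polynomial Finset
namespace SchurAux


lemma deriv_hermite : ∀ n : ℕ, derivative (hermite (n+1)) = ((n : ℤ[X]) + 1) * hermite n := by
  intro n
  induction n using Nat.twoStepInduction with
  | zero => simp [hermite_one, hermite_zero]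
  | one =>
      rw [hermite_succ, hermite_one]
      simp [derivative_mul]
      ring
  | more n ih1 ih2 =>
      have e2 : derivative (hermite (n+2)) = ((n : ℤ[X]) + 2) * hermite (n+1) := by
        rw [ih2]; push_cast; ring
      rw [hermite_succ (n+2), derivative_sub, derivative_mul, derivative_X, one_mul, e2,
        derivative_mul, ih1]
      have hd : derivative ((n : ℤ[X]) + 2) = 0 := by simp
      rw [hd]
      have hs : X * hermite (n+1) = hermite (n+2) + ((n : ℤ[X]) + 1) * hermite n := by
        rw [hermite_succ (n+1), ih1]; ring
      push_cast
      linear_combination ((n:ℤ[X]) + 2) * hs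

lemma hermite_three_term (n : ℕ) :
    hermite (n+2) = X * hermite (n+1) - ((n : ℤ[X]) + 1) * hermite n := by
  rw [hermite_succ (n+1), deriv_hermite]

lemma hermite_ode (n : ℕ) :
    derivative (derivative (hermite n)) - X * derivative (hermite n)
      + (n : ℤ[X]) * hermite n = 0 := by
  cases n with
  | zero => simp [hermite_zero]
  | succ m =>
      rw [deriv_hermite m, derivative_mul]
      have hd : derivative ((m : ℤ[X]) + 1) = 0 := by simp
      rw [hd]
      have hs : X * hermite m = hermite (m+1) + derivative (hermite m) := by
        rw [hermite_succ]; ring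
      push_cast
      linear_combination (-((m:ℤ[X]) + 1)) * hs


noncomputable def Hr (n : ℕ) : ℝ[X] := (hermite n).map (Int.castRingHom ℝ)
noncomputable def Hc (n : ℕ) : ℂ[X] := (hermite n).map (Int.castRingHom ℂ)

lemma Hr_monic (n : ℕ) : (Hr n).Monic := (hermite_monic n).map _
lemma Hc_monic (n : ℕ) : (Hc n).Monic := (hermite_monic n).map _
lemma Hr_natDegree (n : ℕ) : (Hr n).natDegree = n := by
  rw [Hr, Monic.natDegree_map (hermite_monic n), natDegree_hermite]
lemma Hc_natDegree (n : ℕ) : (Hc n).natDegree = n := by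
  rw [Hc, Monic.natDegree_map (hermite_monic n), natDegree_hermite]

lemma Hr_ode (n : ℕ) :
    derivative (derivative (Hr n)) - X * derivative (Hr n) + (n : ℝ[X]) * Hr n = 0 := by
  have := congrArg (Polynomial.map (Int.castRingHom ℝ)) (hermite_ode n)
  simpa [Hr, Polynomial.map_add, Polynomial.map_sub, Polynomial.map_mul, derivative_map] using this

lemma Hc_eq_map_Hr (n : ℕ) : Hc n = (Hr n).map (algebraMap ℝ ℂ) := by
  rw [Hr, Hc, Polynomial.map_map]
  congr 1

lemma Hc_three_term (n : ℕ) :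
    Hc (n+2) = X * Hc (n+1) - ((n : ℂ[X]) + 1) * Hc n := by
  have := congrArg (Polynomial.map (Int.castRingHom ℂ)) (hermite_three_term n)
  simpa [Hc, Polynomial.map_sub, Polynomial.map_mul] using this

lemma Hr_deriv (n : ℕ) : derivative (Hr (n+1)) = ((n : ℝ[X]) + 1) * Hr n := by
  have := congrArg (Polynomial.map (Int.castRingHom ℝ)) (deriv_hermite n)
  simpa [Hr, Polynomial.map_mul, derivative_map] using this

lemma coeff_X_mul_derivative (f : ℝ[X]) (r : ℕ) :
    (X * derivative f).coeff r = (r : ℝ) * f.coeff r := by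
  cases r with
  | zero => simp
  | succ s =>
      rw [coeff_X_mul, coeff_derivative]
      push_cast; ring


lemma ode_unique {n : ℕ} {p q : ℝ[X]} (hp : p.Monic) (hq : q.Monic)
    (hpd : p.natDegree = n) (hqd : q.natDegree = n)
    (hpo : derivative (derivative p) - X * derivative p + (n : ℝ[X]) * p = 0)
    (hqo : derivative (derivative q) - X * derivative q + (n : ℝ[X]) * q = 0) :
    p = q := by
  by_contra hne
  have hd0 : p - q ≠ 0 := sub_ne_zero.mpr hne
  set d := p - q with hd
  have hdeg : d.natDegree < n := by
    have h1 : d.degree < p.degree := by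
      apply degree_sub_lt _ hp.ne_zero
      · rw [hp.leadingCoeff, hq.leadingCoeff]
      · rw [degree_eq_natDegree hp.ne_zero, degree_eq_natDegree hq.ne_zero, hpd, hqd]
    have h2 := (natDegree_lt_natDegree_iff hd0).mpr h1
    omega
  have hode : derivative (derivative d) - X * derivative d + (n : ℝ[X]) * d = 0 := by
    rw [hd, derivative_sub, derivative_sub]
    linear_combination hpo - hqo
  set r := d.natDegree with hr
  have hc := congrArg (fun f => Polynomial.coeff f r) hode
  simp only [coeff_add, coeff_sub, coeff_zero] at hc
  rw [coeff_X_mul_derivative, ← Polynomial.C_eq_natCast, coeff_C_mul] at hc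
  have h2 : (derivative (derivative d)).coeff r = 0 := by
    rw [coeff_derivative, coeff_derivative, coeff_eq_zero_of_natDegree_lt (by omega)]
    ring
  rw [h2] at hc
  have hcr : d.coeff r ≠ 0 := by
    rw [hr]
    exact fun h => hd0 (leadingCoeff_eq_zero.mp h)
  have hnr : (n : ℝ) ≠ (r : ℝ) := by
    exact_mod_cast Nat.ne_of_gt hdeg
  apply hcr
  have : ((n : ℝ) - r) * d.coeff r = 0 := by linarith
  rcases mul_eq_zero.mp this with h | h
  · exact absurd (by linarith : (n:ℝ) = r) hnr
  · exact h


lemma eval_eq_prod_roots {q : ℂ[X]} (hq : q.Monic) (β : ℂ) :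
    q.eval β = (q.roots.map (fun γ => β - γ)).prod := by
  conv_lhs => rw [(IsAlgClosed.splits q).eq_prod_roots_of_monic hq]
  rw [eval_multiset_prod, Multiset.map_map]
  congr 1
  apply Multiset.map_congr rfl
  intro γ _
  simp

lemma card_roots_of_monic {q : ℂ[X]} (hq : q.Monic) :
    Multiset.card q.roots = q.natDegree :=
  splits_iff_card_roots.mp (IsAlgClosed.splits q)

lemma swap_prod {p q : ℂ[X]} (hp : p.Monic) (hq : q.Monic) :
    (p.roots.map (fun β => q.eval β)).prod
      = (-1) ^ (p.natDegree * q.natDegree) * (q.roots.map (fun γ => p.eval γ)).prod := by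
  have h1 : (p.roots.map (fun β => q.eval β)).prod
      = (p.roots.map (fun β => (q.roots.map (fun γ => β - γ)).prod)).prod := by
    congr 1; exact Multiset.map_congr rfl (fun β _ => eval_eq_prod_roots hq β)
  rw [h1, Multiset.prod_map_prod_map]
  have h2 : ∀ γ : ℂ, (p.roots.map (fun β => β - γ)).prod
      = (-1) ^ p.natDegree * p.eval γ := by
    intro γ
    rw [eval_eq_prod_roots hp γ]
    have : (p.roots.map (fun β => β - γ)) = (p.roots.map (fun β => γ - β)).map Neg.neg := by
      rw [Multiset.map_map]
      exact Multiset.map_congr rfl (fun β _ => by simp)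
    rw [this, Multiset.prod_map_neg, Multiset.card_map, card_roots_of_monic hp]
  have h3 : (q.roots.map (fun γ => (p.roots.map (fun β => β - γ)).prod)).prod
      = (q.roots.map (fun γ => (-1) ^ p.natDegree * p.eval γ)).prod := by
    congr 1; exact Multiset.map_congr rfl (fun γ _ => h2 γ)
  rw [h3]
  have h4 : (q.roots.map (fun γ => (-1 : ℂ) ^ p.natDegree * p.eval γ)).prod
      = ((-1 : ℂ) ^ p.natDegree) ^ (Multiset.card q.roots)
        * (q.roots.map (fun γ => p.eval γ)).prod := by
    rw [Multiset.prod_map_mul (m := q.roots) (f := fun _ => ((-1:ℂ)) ^ p.natDegree)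
      (g := fun γ => p.eval γ), Multiset.map_const', Multiset.prod_replicate]
  rw [h4, card_roots_of_monic hq, ← pow_mul]

lemma prodA : ∀ n : ℕ,
    ((Hc n).roots.map (fun β => (Hc (n+1)).eval β)).prod
      = ∏ k ∈ Icc 1 n, (-(k:ℂ))^k := by
  intro n
  induction n with
  | zero =>
      have : (Hc 0) = 1 := by
        simp [Hc, hermite_zero, Polynomial.map_one]
      rw [this, roots_one]
      simp
  | succ m ih =>
      have h1 : ∀ β ∈ (Hc (m+1)).roots,
          (Hc (m+2)).eval β = (-((m:ℂ)+1)) * (Hc m).eval β := by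
        intro β hβ
        have hroot : (Hc (m+1)).eval β = 0 := (isRoot_of_mem_roots hβ)
        rw [Hc_three_term m]
        simp [hroot]
        try ring
      have h2 : ((Hc (m+1)).roots.map (fun β => (Hc (m+2)).eval β)).prod
          = ((Hc (m+1)).roots.map (fun β => (-((m:ℂ)+1)) * (Hc m).eval β)).prod := by
        congr 1; exact Multiset.map_congr rfl h1
      rw [h2]
      have h3 : ((Hc (m+1)).roots.map (fun β => (-((m:ℂ)+1)) * (Hc m).eval β)).prod
          = (-((m:ℂ)+1)) ^ (m+1) * ((Hc (m+1)).roots.map (fun β => (Hc m).eval β)).prod := by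
        rw [Multiset.prod_map_mul (m := (Hc (m+1)).roots) (f := fun _ => (-((m:ℂ)+1)))
          (g := fun β => (Hc m).eval β), Multiset.map_const', Multiset.prod_replicate,
          card_roots_of_monic (Hc_monic (m+1)), Hc_natDegree]
      rw [h3, swap_prod (Hc_monic (m+1)) (Hc_monic m), Hc_natDegree, Hc_natDegree, ih]
      have heven : Even ((m+1) * m) := by
        rw [Nat.mul_comm]; exact Nat.even_mul_succ_self m
      rw [heven.neg_one_pow, one_mul, Finset.prod_Icc_succ_top (by omega : 1 ≤ m + 1)]
      push_cast
      ring

section Pairs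
variable {N : ℕ}

@[to_additive]
lemma prod_ne_eq_double {M : Type*} [CommMonoid M] (f : Fin N → Fin N → M) :
    ∏ p ∈ univ.filter (fun p : Fin N × Fin N => p.1 ≠ p.2), f p.1 p.2
      = ∏ i, ∏ j ∈ univ.erase i, f i j := by
  rw [← Finset.prod_sigma univ (fun i => univ.erase i) (fun p => f p.1 p.2)]
  refine Finset.prod_nbij' (fun p => ⟨p.1, p.2⟩) (fun p => (p.1, p.2)) ?_ ?_ ?_ ?_ ?_ <;>
    simp +contextual [Finset.mem_sigma, ne_comm, eq_comm]

lemma pairs_union (N : ℕ) :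
    univ.filter (fun p : Fin N × Fin N => p.1 ≠ p.2)
      = (univ.filter (fun p : Fin N × Fin N => p.1 < p.2))
        ∪ (univ.filter (fun p : Fin N × Fin N => p.2 < p.1)) := by
  ext p
  simp only [mem_filter, mem_union, mem_univ, true_and]
  constructor
  · exact fun h => lt_or_gt_of_ne h
  · rintro (h | h) <;> [exact ne_of_lt h; exact (ne_of_lt h).symm]

lemma pairs_disjoint (N : ℕ) :
    Disjoint (univ.filter (fun p : Fin N × Fin N => p.1 < p.2))
      (univ.filter (fun p : Fin N × Fin N => p.2 < p.1)) := by
  rw [Finset.disjoint_filter]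
  intro p _ h
  exact fun h2 => absurd (h.trans h2) (lt_irrefl _)

@[to_additive]
lemma prod_gt_eq_lt_swap {M : Type*} [CommMonoid M] (f : Fin N × Fin N → M) :
    ∏ p ∈ univ.filter (fun p : Fin N × Fin N => p.2 < p.1), f p
      = ∏ p ∈ univ.filter (fun p : Fin N × Fin N => p.1 < p.2), f p.swap := by
  refine Finset.prod_nbij' Prod.swap Prod.swap ?_ ?_ ?_ ?_ ?_ <;>
    simp +contextual [Prod.swap]

@[to_additive]
lemma prod_ne_eq_pairs {M : Type*} [CommMonoid M] (f : Fin N × Fin N → M) :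
    ∏ p ∈ univ.filter (fun p : Fin N × Fin N => p.1 ≠ p.2), f p
      = ∏ p ∈ univ.filter (fun p : Fin N × Fin N => p.1 < p.2), (f p * f p.swap) := by
  rw [pairs_union, Finset.prod_union (pairs_disjoint N), prod_gt_eq_lt_swap,
    Finset.prod_mul_distrib]

lemma card_pairs (N : ℕ) :
    2 * (univ.filter (fun p : Fin N × Fin N => p.1 < p.2)).card = N * N - N := by
  have h1 : (univ.filter (fun p : Fin N × Fin N => p.1 ≠ p.2)).card = N * N - N := by
    have : univ.filter (fun p : Fin N × Fin N => p.1 ≠ p.2) = Finset.offDiag univ := by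
      ext p
      simp [Finset.mem_offDiag]
    rw [this, Finset.offDiag_card, card_univ, Fintype.card_fin]
  have h2 : (univ.filter (fun p : Fin N × Fin N => p.2 < p.1)).card
      = (univ.filter (fun p : Fin N × Fin N => p.1 < p.2)).card := by
    refine Finset.card_nbij Prod.swap ?_ ?_ ?_ <;>
      simp +contextual [Prod.swap, Set.InjOn, Set.SurjOn, Set.subset_def]
    exact fun a h => h
  rw [pairs_union, Finset.card_union_of_disjoint (pairs_disjoint N), h2] at h1
  omega

lemma sum_Icc_eq (N : ℕ) (hN : 1 ≤ N) : 2 * ∑ k ∈ Icc 1 (N-1), k = N * N - N := by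
  have h1 : ∑ k ∈ Icc 1 (N-1), k = ∑ k ∈ range N, k := by
    apply Finset.sum_subset
    · intro x hx; simp only [mem_Icc] at hx; simp only [mem_range]; omega
    · intro x hx hnx
      simp only [mem_range] at hx
      simp only [mem_Icc] at hnx
      omega
  rw [h1, mul_comm, Finset.sum_range_id_mul_two]
  rw [Nat.mul_sub, mul_one]

end Pairs

lemma core (N : ℕ) (hN : 2 ≤ N) (eta : Fin N → ℝ) (hinj : Function.Injective eta)
    (hrel : ∀ i, 2 * ∑ j ∈ univ.erase i, ∏ k ∈ (univ.erase i).erase j, (eta i - eta k)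
        = eta i * ∏ j ∈ univ.erase i, (eta i - eta j)) :
    ∏ p ∈ univ.filter (fun p : Fin N × Fin N => p.1 < p.2), (eta p.1 - eta p.2)^2
      = ∏ k ∈ Icc 1 N, (k:ℝ)^k := by
  classical
  set g : ℝ[X] := Lagrange.nodal univ eta with hg
  have hgmonic : g.Monic := Lagrange.nodal_monic
  have hgdeg : g.natDegree = N := by
    rw [hg, Lagrange.natDegree_nodal, card_univ, Fintype.card_fin]
  -- second derivative evaluation
  have hdd : ∀ i, (derivative (derivative g)).eval (eta i)
      = 2 * ∑ j ∈ univ.erase i, ∏ k ∈ (univ.erase i).erase j, (eta i - eta k) := by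
    intro i
    have e1 : derivative (derivative g)
        = ∑ a : Fin N, ∑ b ∈ univ.erase a, Lagrange.nodal ((univ.erase a).erase b) eta := by
      rw [hg, Lagrange.derivative_nodal, derivative_sum]
      exact Finset.sum_congr rfl fun a _ => Lagrange.derivative_nodal
    rw [e1, eval_finset_sum]
    have e2 : ∀ a, (∑ b ∈ univ.erase a, Lagrange.nodal ((univ.erase a).erase b) eta).eval (eta i)
        = ∑ b ∈ univ.erase a, (Lagrange.nodal ((univ.erase a).erase b) eta).eval (eta i) := by
      intro a; rw [eval_finset_sum]
    have key : ∀ a ∈ univ.erase i,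
        (∑ b ∈ univ.erase a, Lagrange.nodal ((univ.erase a).erase b) eta).eval (eta i)
          = (Lagrange.nodal ((univ.erase i).erase a) eta).eval (eta i) := by
      intro a ha
      have hai : a ≠ i := (Finset.mem_erase.mp ha).1
      rw [e2 a]
      have hi : i ∈ univ.erase a := Finset.mem_erase.mpr ⟨Ne.symm hai, mem_univ i⟩
      rw [← Finset.add_sum_erase _ _ hi]
      have hz : ∑ b ∈ (univ.erase a).erase i,
          (Lagrange.nodal ((univ.erase a).erase b) eta).eval (eta i) = 0 := by
        apply Finset.sum_eq_zero
        intro b hb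
        have hbi : b ≠ i := (Finset.mem_erase.mp hb).1
        have hba : b ≠ a := (Finset.mem_erase.mp (Finset.mem_erase.mp hb).2).1
        apply Lagrange.eval_nodal_at_node
        exact Finset.mem_erase.mpr ⟨Ne.symm hbi,
          Finset.mem_erase.mpr ⟨Ne.symm hai, mem_univ i⟩⟩
      rw [hz, add_zero, Finset.erase_right_comm]
    rw [← Finset.add_sum_erase _ _ (mem_univ i), e2 i,
      Finset.sum_congr rfl key, two_mul]
    congr 1 <;> exact Finset.sum_congr rfl fun b _ => Lagrange.eval_nodal
  have hXd : ∀ i, (X * derivative g).eval (eta i)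
      = eta i * ∏ j ∈ univ.erase i, (eta i - eta j) := by
    intro i
    rw [eval_mul, eval_X, hg, Lagrange.eval_nodal_derivative_eval_node_eq (mem_univ i),
      Lagrange.eval_nodal]
  have hgeval : ∀ i, g.eval (eta i) = 0 := fun i => Lagrange.eval_nodal_at_node (mem_univ i)
  set q : ℝ[X] := derivative (derivative g) - X * derivative g + (N:ℝ[X]) * g with hqdef
  have hqeval : ∀ i, q.eval (eta i) = 0 := by
    intro i
    rw [hqdef, eval_add, eval_sub, hdd i, hXd i, eval_mul, eval_natCast, hgeval i]
    have := hrel i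
    linarith
  have hddltN : (derivative (derivative g)).natDegree < N := by
    have h1 := natDegree_derivative_le (derivative g)
    have h2 := natDegree_derivative_le g
    omega
  have hqdegle : q.natDegree ≤ N := by
    apply le_trans (natDegree_add_le _ _)
    apply max_le
    · apply le_trans (natDegree_sub_le _ _)
      apply max_le (le_of_lt hddltN)
      apply le_trans (natDegree_mul_le)
      have := natDegree_derivative_le g
      rw [natDegree_X]
      omega
    · rw [← Polynomial.C_eq_natCast]
      exact le_trans (natDegree_C_mul_le _ _) (le_of_eq hgdeg)
  have hqcoeffN : q.coeff N = 0 := by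
    rw [hqdef]
    simp only [coeff_add, coeff_sub]
    rw [coeff_X_mul_derivative, ← Polynomial.C_eq_natCast, coeff_C_mul,
      coeff_eq_zero_of_natDegree_lt hddltN]
    have : g.coeff N = 1 := by
      have := hgmonic.coeff_natDegree
      rwa [hgdeg] at this
    rw [this]
    ring
  have hq0 : q = 0 := by
    rcases eq_or_lt_of_le hqdegle with he | hl
    · by_contra h0
      apply h0
      apply leadingCoeff_eq_zero.mp
      rw [leadingCoeff, he, hqcoeffN]
    · exact Polynomial.eq_zero_of_natDegree_lt_card_of_eval_eq_zero q hinj hqeval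
        (by rwa [Fintype.card_fin])
  have hgHr : g = Hr N := by
    apply ode_unique hgmonic (Hr_monic N) hgdeg (Hr_natDegree N) _ (Hr_ode N)
    rw [← hqdef, hq0]
  -- roots over ℂ
  set mm : Multiset ℂ := univ.val.map (fun i => ((eta i : ℝ) : ℂ)) with hmm
  have hmap : g.map (algebraMap ℝ ℂ) = (mm.map (fun a => X - C a)).prod := by
    rw [hg, Lagrange.nodal, Polynomial.map_prod, hmm, Multiset.map_map,
      Finset.prod_eq_multiset_prod]
    congr 1
    apply Multiset.map_congr rfl
    intro i _
    simp
  have hHcroots : (Hc N).roots = mm := by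
    rw [Hc_eq_map_Hr, ← hgHr, hmap, roots_multiset_prod_X_sub_C]
  -- the product of derivative evaluations
  obtain ⟨M, hNM⟩ : ∃ M, N = M + 1 := ⟨N - 1, by omega⟩
  have hdg : derivative g = ((M:ℝ[X]) + 1) * Hr M := by
    rw [hgHr, hNM, Hr_deriv]
  have hP1a : ∏ i, (derivative g).eval (eta i)
      = ∏ i, ∏ j ∈ univ.erase i, (eta i - eta j) := by
    apply Finset.prod_congr rfl
    intro i _
    rw [hg, Lagrange.eval_nodal_derivative_eval_node_eq (mem_univ i), Lagrange.eval_nodal]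
  have hP1b : ∏ i, (derivative g).eval (eta i)
      = (N:ℝ)^N * ∏ i, (Hr M).eval (eta i) := by
    have h1 : ∀ i : Fin N, (derivative g).eval (eta i) = (N:ℝ) * (Hr M).eval (eta i) := by
      intro i
      rw [hdg, eval_mul, eval_add, eval_natCast, eval_one]
      congr 1
      rw [hNM]
      push_cast
      ring
    rw [Finset.prod_congr rfl (fun i _ => h1 i), Finset.prod_mul_distrib,
      Finset.prod_const, card_univ, Fintype.card_fin]
  -- complexify
  have hC : ∀ i, (Hc M).eval ((eta i : ℂ)) = (((Hr M).eval (eta i) : ℝ) : ℂ) := by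
    intro i
    rw [Hc_eq_map_Hr, eval_map]
    exact Polynomial.eval₂_at_apply (algebraMap ℝ ℂ) (eta i)
  have hswap1 : ∏ i, (Hc M).eval ((eta i : ℂ))
      = ((Hc N).roots.map (fun β => (Hc M).eval β)).prod := by
    rw [hHcroots, hmm, Multiset.map_map, Finset.prod_eq_multiset_prod]
    rfl
  have hswap2 : ((Hc N).roots.map (fun β => (Hc M).eval β)).prod
      = ∏ k ∈ Icc 1 M, (-(k:ℂ))^k := by
    rw [swap_prod (Hc_monic N) (Hc_monic M), Hc_natDegree, Hc_natDegree]
    have heven : Even (N * M) := by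
      rw [hNM, Nat.mul_comm]
      exact Nat.even_mul_succ_self M
    rw [heven.neg_one_pow, one_mul]
    have hA := prodA M
    rw [← hNM] at hA
    exact hA
  set K := ∑ k ∈ Icc 1 M, k with hK
  have hsign : ∏ k ∈ Icc 1 M, (-(k:ℂ))^k = (-1)^K * ∏ k ∈ Icc 1 M, (k:ℂ)^k := by
    rw [hK, ← Finset.prod_pow_eq_pow_sum, ← Finset.prod_mul_distrib]
    apply Finset.prod_congr rfl
    intro k _
    rw [neg_pow]
  have hreal : ∏ i, (Hr M).eval (eta i) = (-1)^K * ∏ k ∈ Icc 1 M, (k:ℝ)^k := by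
    have hcx : ((∏ i, (Hr M).eval (eta i) : ℝ) : ℂ)
        = (-1)^K * ∏ k ∈ Icc 1 M, (k:ℂ)^k := by
      push_cast
      rw [Finset.prod_congr rfl (fun i _ => (hC i).symm), hswap1, hswap2, hsign]
    exact_mod_cast hcx
  have hP1c : ∏ i, ∏ j ∈ univ.erase i, (eta i - eta j)
      = (-1)^K * ∏ k ∈ Icc 1 N, (k:ℝ)^k := by
    rw [← hP1a, hP1b, hreal, hNM, Finset.prod_Icc_succ_top (by omega : 1 ≤ M+1)]
    push_cast
    ring
  set Kp := (univ.filter (fun p : Fin N × Fin N => p.1 < p.2)).card with hKpdef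
  have hD : ∏ i, ∏ j ∈ univ.erase i, (eta i - eta j)
      = (-1)^Kp * ∏ p ∈ univ.filter (fun p : Fin N × Fin N => p.1 < p.2),
          (eta p.1 - eta p.2)^2 := by
    rw [← prod_ne_eq_double (fun i j => eta i - eta j), prod_ne_eq_pairs]
    have hterm : ∀ p ∈ univ.filter (fun p : Fin N × Fin N => p.1 < p.2),
        (fun p : Fin N × Fin N => eta p.1 - eta p.2) p
          * (fun p : Fin N × Fin N => eta p.1 - eta p.2) p.swap
        = (-1) * (eta p.1 - eta p.2)^2 := by
      intro p _
      simp only [Prod.fst_swap, Prod.snd_swap]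
      ring
    rw [Finset.prod_congr rfl hterm, Finset.prod_mul_distrib, Finset.prod_const]
  have hKp : Kp = K := by
    have h1 := card_pairs N
    have h2 := sum_Icc_eq N (by omega)
    have h3 : N - 1 = M := by omega
    rw [h3] at h2
    rw [← hKpdef] at h1
    rw [← hK] at h2
    omega
  rw [hKp] at hD
  have hfin := hP1c.symm.trans hD
  have hne : ((-1 : ℝ))^K ≠ 0 := pow_ne_zero _ (by norm_num)
  field_simp at hfin
  linarith [hfin]


end SchurAux

open SchurAux Finset

/-- **Schur's bound.** If `x_1² + ⋯ + x_N² ≤ 1`, then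
`∏_{i<j}(x_i − x_j)² ≤ c_N^{−(N²−N)/2}` where
`c_N = (N² − N)/(2²·3³·⋯·N^N)^{2/(N²−N)}`. -/
theorem stmt5 (N : ℕ) (x : Fin N → ℝ) (hx : ∑ i, x i ^ 2 ≤ 1) :
    ∏ p ∈ Finset.univ.filter (fun p : Fin N × Fin N => p.1 < p.2), (x p.1 - x p.2) ^ 2 ≤
      (((N : ℝ) ^ 2 - N) /
          (∏ j ∈ Finset.Icc 2 N, (j : ℝ) ^ j) ^ ((2 : ℝ) / ((N : ℝ) ^ 2 - N))) ^
        (-(((N : ℝ) ^ 2 - N) / 2)) := by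
  classical
  by_cases hN2 : N < 2
  · -- trivial cases N = 0, 1
    have hm0 : ((N:ℝ)^2 - N) = 0 := by
      interval_cases N <;> norm_num
    have hIcc : Finset.Icc 2 N = ∅ := by
      apply Finset.Icc_eq_empty
      omega
    have hLHS : ∏ p ∈ Finset.univ.filter (fun p : Fin N × Fin N => p.1 < p.2),
        (x p.1 - x p.2) ^ 2 = 1 := by
      apply Finset.prod_eq_one
      intro p hp
      exfalso
      simp only [mem_filter] at hp
      have := hp.2
      have h1 : (p.1 : ℕ) < N := p.1.isLt
      have h2 : (p.2 : ℕ) < N := p.2.isLt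
      have h3 : (p.1 : ℕ) < (p.2 : ℕ) := this
      omega
    rw [hLHS, hm0, hIcc]
    norm_num
  push_neg at hN2
  set pairs := Finset.univ.filter (fun p : Fin N × Fin N => p.1 < p.2) with hpairs
  set Kp := pairs.card with hKpdef
  have hKp2 : 2 * Kp = N * N - N := card_pairs N
  have hNN : N * 2 ≤ N * N := Nat.mul_le_mul_left N hN2
  have hKpos : 0 < Kp := by omega
  set D : (Fin N → ℝ) → ℝ := fun y => ∏ p ∈ pairs, (y p.1 - y p.2)^2 with hD
  set P : ℝ := ∏ j ∈ Finset.Icc 2 N, (j:ℝ)^j with hP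
  have hPpos : 0 < P := by
    apply Finset.prod_pos
    intro j hj
    have : 2 ≤ j := (Finset.mem_Icc.mp hj).1
    positivity
  have hmR : ((N:ℝ)^2 - N) = ((2 * Kp : ℕ) : ℝ) := by
    rw [hKp2, Nat.cast_sub (by omega : N ≤ N * N)]
    push_cast
    ring
  have hmRpos : (0:ℝ) < (N:ℝ)^2 - N := by
    rw [hmR]
    exact_mod_cast (by omega : 0 < 2 * Kp)
  have hRHS : (((N : ℝ) ^ 2 - N) / P ^ ((2 : ℝ) / ((N : ℝ) ^ 2 - N))) ^ (-(((N : ℝ) ^ 2 - N) / 2))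
      = P / ((N:ℝ)^2 - N) ^ Kp := by
    have hQpos : 0 < P ^ ((2:ℝ)/((N:ℝ)^2 - N)) := Real.rpow_pos_of_pos hPpos _
    rw [Real.rpow_neg (le_of_lt (div_pos hmRpos hQpos))]
    rw [Real.div_rpow hmRpos.le hQpos.le]
    have h1 : (P ^ ((2:ℝ)/((N:ℝ)^2 - N))) ^ (((N:ℝ)^2 - N)/2) = P := by
      rw [← Real.rpow_mul hPpos.le, show (2:ℝ)/((N:ℝ)^2 - N) * (((N:ℝ)^2 - N)/2) = 1 by
        field_simp; exact div_self (by have : (2:ℝ) ≤ N := by exact_mod_cast hN2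
                                       linarith), Real.rpow_one]
    rw [h1]
    have h2 : ((N:ℝ)^2 - N) ^ (((N:ℝ)^2 - N)/2) = ((N:ℝ)^2 - N) ^ (Kp:ℕ) := by
      rw [show ((N:ℝ)^2 - N)/2 = ((Kp:ℕ):ℝ) by rw [hmR]; push_cast; ring]
      exact Real.rpow_natCast _ Kp
    rw [h2, inv_div]
  rw [hRHS]
  -- compactness and maximum
  have hDcont : Continuous D := by
    apply continuous_finset_prod
    intro p _
    exact ((continuous_apply p.1).sub (continuous_apply p.2)).pow 2
  set S : Set (Fin N → ℝ) := {y | ∑ i, y i ^ 2 ≤ 1} with hSdef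
  have hScompact : IsCompact S := by
    have hclosed : IsClosed S := by
      apply isClosed_le _ continuous_const
      exact continuous_finset_sum _ (fun i _ => (continuous_apply i).pow 2)
    have hbdd : Bornology.IsBounded S := by
      apply (Metric.isBounded_closedBall (x := (0 : Fin N → ℝ)) (r := 1)).subset
      intro y hy
      rw [Metric.mem_closedBall, dist_zero_right]
      rw [pi_norm_le_iff_of_nonneg zero_le_one]
      intro i
      have h1 : y i ^ 2 ≤ 1 := le_trans (Finset.single_le_sum
        (f := fun j => y j ^ 2) (fun j _ => sq_nonneg _) (mem_univ i)) hy
      rw [Real.norm_eq_abs]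
      nlinarith [sq_abs (y i), abs_nonneg (y i)]
    exact Metric.isCompact_of_isClosed_isBounded hclosed hbdd
  obtain ⟨xi, hxiS, hximax⟩ := hScompact.exists_isMaxOn ⟨0, by simp [hSdef]⟩
    hDcont.continuousOn
  have hmaxx : D x ≤ D xi := hximax hx
  rcases le_or_gt (D xi) 0 with hDxi | hDxi
  · calc D x ≤ D xi := hmaxx
      _ ≤ 0 := hDxi
      _ ≤ P / ((N:ℝ)^2 - N) ^ Kp := by positivity
  -- positive max case
  have hinj : Function.Injective xi := by
    intro a b hab
    by_contra hne
    have hfac : ∃ p ∈ pairs, (xi p.1 - xi p.2)^2 = 0 := by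
      rcases lt_or_gt_of_ne hne with h | h
      · exact ⟨(a, b), Finset.mem_filter.mpr ⟨mem_univ _, h⟩, by simp [hab]⟩
      · exact ⟨(b, a), Finset.mem_filter.mpr ⟨mem_univ _, h⟩, by simp [hab]⟩
    obtain ⟨p, hp, hpz⟩ := hfac
    have : D xi = 0 := Finset.prod_eq_zero hp hpz
    linarith
  have hxile : ∑ i, xi i ^ 2 ≤ 1 := hxiS
  have hsum1 : ∑ i, xi i ^ 2 = 1 := by
    rcases eq_or_lt_of_le hxile with h | hlt
    · exact h
    exfalso
    set sv := ∑ i, xi i ^ 2 with hsv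
    have hsv0 : 0 < sv := by
      rcases eq_or_lt_of_le (Finset.sum_nonneg (fun i _ => sq_nonneg (xi i))) with h0 | h0
      · exfalso
        have hzero : ∀ i, xi i = 0 := by
          intro i
          have := (Finset.sum_eq_zero_iff_of_nonneg (fun i _ => sq_nonneg (xi i))).mp
            h0.symm i (mem_univ i)
          exact pow_eq_zero_iff (by norm_num) |>.mp this
        obtain ⟨p, hp⟩ := Finset.card_pos.mp (hKpdef ▸ hKpos)
        have : D xi = 0 := Finset.prod_eq_zero hp (by simp [hzero])
        linarith
      · exact h0
    set c := (Real.sqrt sv)⁻¹ with hc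
    have hsq : Real.sqrt sv ^ 2 = sv := Real.sq_sqrt hsv0.le
    have hsqpos : 0 < Real.sqrt sv := Real.sqrt_pos.mpr hsv0
    set y := fun i => c * xi i with hy
    have hyS : y ∈ S := by
      show ∑ i, y i ^ 2 ≤ 1
      have : ∑ i, y i ^ 2 = c^2 * sv := by
        rw [hsv, Finset.mul_sum]
        exact Finset.sum_congr rfl fun i _ => by rw [hy]; ring
      rw [this, hc]
      rw [← hsq]
      field_simp
      rw [Real.sqrt_sq hsqpos.le]
    have hDy : D y = (c^2)^Kp * D xi := by
      show (∏ p ∈ pairs, (y p.1 - y p.2)^2)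
          = (c^2)^Kp * ∏ p ∈ pairs, (xi p.1 - xi p.2)^2
      calc ∏ p ∈ pairs, (y p.1 - y p.2)^2
          = ∏ p ∈ pairs, (c^2 * ((xi p.1 - xi p.2)^2)) := by
            apply Finset.prod_congr rfl; intro p _; rw [hy]; ring
        _ = (c^2)^Kp * ∏ p ∈ pairs, (xi p.1 - xi p.2)^2 := by
            rw [Finset.prod_mul_distrib, Finset.prod_const, hKpdef]
    have hc2 : 1 < c^2 := by
      rw [hc, inv_pow, hsq]
      have h1 : sv⁻¹ * sv = 1 := inv_mul_cancel₀ hsv0.ne'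
      nlinarith
    have : D xi < D y := by
      rw [hDy]
      nlinarith [one_lt_pow₀ (n := Kp) hc2 (by omega), hDxi]
    exact absurd (hximax hyS) (not_le.mpr this)
  -- Euler–Lagrange step
  set Sf : Fin N → ℝ := fun a => ∑ b ∈ univ.erase a, (xi a - xi b)⁻¹ with hSf
  have hxine : ∀ {a b : Fin N}, a ≠ b → xi a - xi b ≠ 0 := by
    intro a b h
    exact sub_ne_zero.mpr (fun he => h (hinj he))
  have hrot : ∀ i j : Fin N, i ≠ j → xi i * Sf j = xi j * Sf i := by
    intro i j hij
    set v : Fin N → ℝ := fun a => if a = i then -xi j else if a = j then xi i else 0 with hv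
    set y : ℝ → Fin N → ℝ := fun θ a =>
      if a = i then xi i * Real.cos θ - xi j * Real.sin θ
      else if a = j then xi i * Real.sin θ + xi j * Real.cos θ
      else xi a with hy
    have hy0 : y 0 = xi := by
      funext a
      by_cases h1 : a = i
      · simp [hy, h1]
      · by_cases h2 : a = j
        · simp [hy, h1, h2, Ne.symm hij]
        · simp [hy, h1, h2]
    have hji : j ∈ univ.erase i := Finset.mem_erase.mpr ⟨Ne.symm hij, mem_univ j⟩
    have hsplit : ∀ f : Fin N → ℝ,
        ∑ a, f a = f i + (f j + ∑ a ∈ (univ.erase i).erase j, f a) := by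
      intro f
      rw [← Finset.add_sum_erase _ _ (mem_univ i), ← Finset.add_sum_erase _ _ hji]
    have hyS : ∀ θ, y θ ∈ S := by
      intro θ
      show ∑ a, y θ a ^ 2 ≤ 1
      have he : ∑ a, y θ a ^ 2 = ∑ a, xi a ^ 2 := by
        rw [hsplit (fun a => y θ a ^ 2), hsplit (fun a => xi a ^ 2)]
        have h3 : ∑ a ∈ (univ.erase i).erase j, y θ a ^ 2
            = ∑ a ∈ (univ.erase i).erase j, xi a ^ 2 := by
          apply Finset.sum_congr rfl
          intro a ha
          have h4 : a ≠ j := (Finset.mem_erase.mp ha).1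
          have h5 : a ≠ i := (Finset.mem_erase.mp (Finset.mem_erase.mp ha).2).1
          simp [hy, h4, h5]
        rw [h3]
        have h6 : y θ i = xi i * Real.cos θ - xi j * Real.sin θ := by simp [hy]
        have h7 : y θ j = xi i * Real.sin θ + xi j * Real.cos θ := by
          simp [hy, Ne.symm hij]
        rw [h6, h7]
        nlinarith [Real.sin_sq_add_cos_sq θ]
      rw [he, hsum1]
    have hyd : ∀ a, HasDerivAt (fun θ => y θ a) (v a) 0 := by
      intro a
      by_cases h1 : a = i
      · have hda := ((Real.hasDerivAt_cos 0).const_mul (xi i)).sub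
          ((Real.hasDerivAt_sin 0).const_mul (xi j))
        have heq : (fun θ => y θ a) = fun θ => xi i * Real.cos θ - xi j * Real.sin θ := by
          funext θ; simp [hy, h1]
        rw [heq]
        have hva : v a = -xi j := by simp [hv, h1]
        rw [hva]
        exact hda.congr_deriv (by simp)
      · by_cases h2 : a = j
        · have hda := ((Real.hasDerivAt_sin 0).const_mul (xi i)).add
            ((Real.hasDerivAt_cos 0).const_mul (xi j))
          have heq : (fun θ => y θ a) = fun θ => xi i * Real.sin θ + xi j * Real.cos θ := by
            funext θ; simp [hy, h1, h2, Ne.symm hij]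
          rw [heq]
          have hva : v a = xi i := by simp [hv, h1, h2, Ne.symm hij]
          rw [hva]
          exact hda.congr_deriv (by simp)
        · have heq : (fun θ => y θ a) = fun _ => xi a := by
            funext θ; simp [hy, h1, h2]
          rw [heq]
          have hva : v a = 0 := by simp [hv, h1, h2]
          rw [hva]
          exact hasDerivAt_const 0 (xi a)
    set φ : ℝ → ℝ := fun θ => ∏ p ∈ pairs, (y θ p.1 - y θ p.2)^2 with hφ
    have hfac : ∀ p ∈ pairs, HasDerivAt (fun θ => (y θ p.1 - y θ p.2)^2)
        (2 * (xi p.1 - xi p.2) * (v p.1 - v p.2)) 0 := by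
      intro p _
      have h := ((hyd p.1).sub (hyd p.2)).pow 2
      refine h.congr_deriv ?_
      simp only [Pi.sub_apply]
      rw [hy0]
      norm_num
    have hφd : HasDerivAt φ (∑ p ∈ pairs, (∏ q ∈ pairs.erase p, (xi q.1 - xi q.2)^2)
        * (2 * (xi p.1 - xi p.2) * (v p.1 - v p.2))) 0 := by
      have h := HasDerivAt.fun_finsetProd hfac
      refine h.congr_deriv (Eq.symm ?_)
      apply Finset.sum_congr rfl
      intro p _
      rw [smul_eq_mul, hy0]
    have hφmax : IsLocalMax φ 0 := by
      apply Filter.Eventually.of_forall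
      intro θ
      have h1 : φ θ = D (y θ) := rfl
      have h2 : φ 0 = D (y 0) := rfl
      rw [h1, h2, hy0]
      exact hximax (hyS θ)
    have hsum0 : ∑ p ∈ pairs, (∏ q ∈ pairs.erase p, (xi q.1 - xi q.2)^2)
        * (2 * (xi p.1 - xi p.2) * (v p.1 - v p.2)) = 0 := by
      rw [← hφd.deriv]
      exact hφmax.deriv_eq_zero
    have hterm : ∀ p ∈ pairs, (∏ q ∈ pairs.erase p, (xi q.1 - xi q.2)^2)
        * (2 * (xi p.1 - xi p.2) * (v p.1 - v p.2))
        = (2 * D xi) * ((v p.1 - v p.2) * (xi p.1 - xi p.2)⁻¹) := by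
      intro p hp
      have hne : xi p.1 - xi p.2 ≠ 0 := hxine (ne_of_lt (mem_filter.mp hp).2)
      have hprod : (∏ q ∈ pairs.erase p, (xi q.1 - xi q.2)^2) * (xi p.1 - xi p.2)^2 = D xi :=
        Finset.prod_erase_mul _ _ hp
      have hA : (∏ q ∈ pairs.erase p, (xi q.1 - xi q.2)^2) = D xi / (xi p.1 - xi p.2)^2 :=
        (eq_div_iff (pow_ne_zero 2 hne)).mpr hprod
      rw [hA]
      field_simp
    rw [Finset.sum_congr rfl hterm, ← Finset.mul_sum] at hsum0
    have hDne : (2:ℝ) * D xi ≠ 0 := ne_of_gt (by linarith)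
    have hsum0' : ∑ p ∈ pairs, (v p.1 - v p.2) * (xi p.1 - xi p.2)⁻¹ = 0 :=
      (mul_eq_zero.mp hsum0).resolve_left hDne
    have hexp : ∑ p ∈ pairs, (v p.1 - v p.2) * (xi p.1 - xi p.2)⁻¹
        = ∑ a, v a * Sf a := by
      calc ∑ p ∈ pairs, (v p.1 - v p.2) * (xi p.1 - xi p.2)⁻¹
          = ∑ p ∈ univ.filter (fun p : Fin N × Fin N => p.1 < p.2),
              ((fun q : Fin N × Fin N => v q.1 * (xi q.1 - xi q.2)⁻¹) p
                + (fun q : Fin N × Fin N => v q.1 * (xi q.1 - xi q.2)⁻¹) p.swap) := by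
            rw [hpairs]
            apply Finset.sum_congr rfl
            intro p hp
            have hne : xi p.1 - xi p.2 ≠ 0 := hxine (ne_of_lt (mem_filter.mp hp).2)
            have hne' : xi p.2 - xi p.1 ≠ 0 := hxine (Ne.symm (ne_of_lt (mem_filter.mp hp).2))
            simp only [Prod.fst_swap, Prod.snd_swap]
            field_simp
            ring
        _ = ∑ p ∈ univ.filter (fun p : Fin N × Fin N => p.1 ≠ p.2),
              (fun q : Fin N × Fin N => v q.1 * (xi q.1 - xi q.2)⁻¹) p :=
            (sum_ne_eq_pairs _).symm
        _ = ∑ a, ∑ b ∈ univ.erase a, v a * (xi a - xi b)⁻¹ :=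
            sum_ne_eq_double (fun a b => v a * (xi a - xi b)⁻¹)
        _ = ∑ a, v a * Sf a := by
            apply Finset.sum_congr rfl
            intro a _
            rw [hSf]
            simp only
            rw [Finset.mul_sum]
    have heval : ∑ a, v a * Sf a = -xi j * Sf i + xi i * Sf j := by
      rw [hsplit (fun a => v a * Sf a)]
      have hvi : v i = -xi j := by simp [hv]
      have hvj : v j = xi i := by simp [hv, Ne.symm hij]
      have hz : ∑ a ∈ (univ.erase i).erase j, v a * Sf a = 0 := by
        apply Finset.sum_eq_zero
        intro a ha
        have h4 : a ≠ j := (Finset.mem_erase.mp ha).1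
        have h5 : a ≠ i := (Finset.mem_erase.mp (Finset.mem_erase.mp ha).2).1
        simp [hv, h4, h5]
      rw [hvi, hvj, hz]
      ring
    rw [hexp, heval] at hsum0'
    linarith
  -- multiplier identification
  obtain ⟨k, hk⟩ : ∃ k, xi k ≠ 0 := by
    by_contra h
    push_neg at h
    have hz : ∑ i, xi i ^ 2 = 0 := Finset.sum_eq_zero (fun i _ => by rw [h i]; ring)
    rw [hsum1] at hz
    norm_num at hz
  have hSval : ∀ a, Sf a = (Sf k / xi k) * xi a := by
    intro a
    by_cases hak : a = k
    · rw [hak]; field_simp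
    · have h := hrot a k hak
      field_simp
      linarith
  have hsumS : ∑ a, xi a * Sf a = (Kp : ℝ) := by
    have h2 : ∑ a, xi a * Sf a
        = ∑ p ∈ univ.filter (fun p : Fin N × Fin N => p.1 < p.2),
            ((fun q : Fin N × Fin N => xi q.1 * (xi q.1 - xi q.2)⁻¹) p
              + (fun q : Fin N × Fin N => xi q.1 * (xi q.1 - xi q.2)⁻¹) p.swap) := by
      calc ∑ a, xi a * Sf a
          = ∑ a, ∑ b ∈ univ.erase a, xi a * (xi a - xi b)⁻¹ := by
            apply Finset.sum_congr rfl
            intro a _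
            rw [hSf]
            simp only
            rw [Finset.mul_sum]
        _ = ∑ p ∈ univ.filter (fun p : Fin N × Fin N => p.1 ≠ p.2),
              (fun q : Fin N × Fin N => xi q.1 * (xi q.1 - xi q.2)⁻¹) p :=
            (sum_ne_eq_double (fun a b => xi a * (xi a - xi b)⁻¹)).symm
        _ = _ := sum_ne_eq_pairs _
    have h1 : ∀ p ∈ univ.filter (fun p : Fin N × Fin N => p.1 < p.2),
        ((fun q : Fin N × Fin N => xi q.1 * (xi q.1 - xi q.2)⁻¹) p
          + (fun q : Fin N × Fin N => xi q.1 * (xi q.1 - xi q.2)⁻¹) p.swap) = 1 := by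
      intro p hp
      have hne : xi p.1 - xi p.2 ≠ 0 := hxine (ne_of_lt (mem_filter.mp hp).2)
      have hne' : xi p.2 - xi p.1 ≠ 0 := hxine (Ne.symm (ne_of_lt (mem_filter.mp hp).2))
      simp only [Prod.fst_swap, Prod.snd_swap]
      field_simp
      ring
    rw [h2, Finset.sum_congr rfl h1, Finset.sum_const, ← hpairs, ← hKpdef,
      nsmul_eq_mul, mul_one]
  have hlam : Sf k / xi k = (Kp:ℝ) := by
    have h3 : ∑ a, xi a * Sf a = (Sf k / xi k) * ∑ a, xi a ^ 2 := by
      rw [Finset.mul_sum]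
      apply Finset.sum_congr rfl
      intro a _
      rw [hSval a]
      ring
    rw [hsumS, hsum1, mul_one] at h3
    linarith
  have hSfin : ∀ a, Sf a = (Kp:ℝ) * xi a := by
    intro a
    rw [hSval a, hlam]
  -- rescale
  have h2Kpos : (0:ℝ) < 2 * (Kp:ℝ) := by
    have : (0:ℝ) < (Kp:ℝ) := by exact_mod_cast hKpos
    linarith
  set c : ℝ := Real.sqrt (2 * (Kp:ℝ)) with hc
  have hc2 : c^2 = 2 * (Kp:ℝ) := Real.sq_sqrt h2Kpos.le
  have hcpos : 0 < c := Real.sqrt_pos.mpr h2Kpos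
  set η : Fin N → ℝ := fun a => c * xi a with heta
  have hetadiff : ∀ a b, η a - η b = c * (xi a - xi b) := by
    intro a b
    rw [heta]
    ring
  have hetainj : Function.Injective η := by
    intro a b hab
    rw [heta] at hab
    simp only at hab
    exact hinj (mul_left_cancel₀ hcpos.ne' hab)
  have hetarel : ∀ i, 2 * ∑ j ∈ univ.erase i, ∏ k ∈ (univ.erase i).erase j, (η i - η k)
      = η i * ∏ j ∈ univ.erase i, (η i - η j) := by
    intro a
    have hSeta : ∑ b ∈ univ.erase a, (η a - η b)⁻¹ = c⁻¹ * Sf a := by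
      rw [hSf]
      simp only
      rw [Finset.mul_sum]
      apply Finset.sum_congr rfl
      intro b hb
      rw [hetadiff, mul_inv]
    have hkey : ∀ b ∈ univ.erase a, ∏ k ∈ (univ.erase a).erase b, (η a - η k)
        = (η a - η b)⁻¹ * ∏ j ∈ univ.erase a, (η a - η j) := by
      intro b hb
      have hba : b ≠ a := (Finset.mem_erase.mp hb).1
      have hne : η a - η b ≠ 0 := by
        rw [hetadiff]
        exact mul_ne_zero hcpos.ne' (hxine (Ne.symm hba))
      rw [← Finset.mul_prod_erase _ _ hb]
      field_simp
    rw [Finset.sum_congr rfl hkey, ← Finset.sum_mul, hSeta, hSfin]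
    have hkey2 : 2 * (c⁻¹ * ((Kp:ℝ) * xi a)) = η a := by
      rw [heta]
      simp only
      rw [eq_comm, ← sub_eq_zero]
      have hinv : c⁻¹ * c = 1 := inv_mul_cancel₀ hcpos.ne'
      linear_combination (c⁻¹ * xi a) * hc2 - (c * xi a) * hinv
    linear_combination (∏ j ∈ univ.erase a, (η a - η j)) * hkey2
  -- apply the core identity
  have hcore := core N hN2 η hetainj hetarel
  have hDeta : ∏ p ∈ univ.filter (fun p : Fin N × Fin N => p.1 < p.2), (η p.1 - η p.2)^2
      = (c^2)^Kp * D xi := by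
    rw [← hpairs]
    calc ∏ p ∈ pairs, (η p.1 - η p.2)^2
        = ∏ p ∈ pairs, (c^2 * ((xi p.1 - xi p.2)^2)) := by
          apply Finset.prod_congr rfl
          intro p _
          rw [hetadiff]
          ring
      _ = (c^2)^Kp * ∏ p ∈ pairs, (xi p.1 - xi p.2)^2 := by
          rw [Finset.prod_mul_distrib, Finset.prod_const, hKpdef]
  have hP0 : ∏ k ∈ Finset.Icc 1 N, (k:ℝ)^k = P := by
    have hins : Finset.Icc 1 N = insert 1 (Finset.Icc 2 N) := by
      ext a
      simp only [Finset.mem_Icc, Finset.mem_insert]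
      omega
    have h1n : (1:ℕ) ∉ Finset.Icc 2 N := by simp
    rw [hins, Finset.prod_insert h1n, hP]
    norm_num
  have hfinal : D xi = P / ((N:ℝ)^2 - N)^Kp := by
    have h1 : (c^2)^Kp * D xi = P := by
      rw [← hDeta, hcore, hP0]
    have h2 : ((N:ℝ)^2 - N)^Kp = (c^2)^Kp := by
      rw [hmR, hc2]
      push_cast
      ring
    rw [h2, eq_div_iff (pow_ne_zero _ (pow_ne_zero _ hcpos.ne') : ((c:ℝ)^2)^Kp ≠ 0)]
    linarith [h1]
  calc D x ≤ D xi := hmaxx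
    _ = P / ((N:ℝ)^2 - N)^Kp := hfinal
end
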